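/- Let a < b and let y : [a,b] → ℝ be continuously differentiable. For each δ > 0 let f̃_δ : [a,b] → ℝ be a continuous function with sup_{t∈[a,b]} |f̃_δ(t) − (y(t) − y(a) − y′(a)(t − a))| ≤ δ, set α = √δ, and define x̃_δ(t) = f̃_δ(t)/α − (1/α²) ∫_a^t e^{−(t−s)/α} f̃_δ(s) ds. Then sup_{t∈[a,b]} |x̃_δ(t) − (y′(t) − y′(a))| → 0 as δ → 0⁺; i.e. formula (34) with the coordination α = √δ gives a regularized differentiation algorithm converging uniformly on [a,b]. -/

import Mathlib

open Set Filter Topology intervalIntegral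
open MeasureTheory (volume ae_of_all)

/-!
Write `f̃_δ = g + n` with `g t = y t - y a - y' a * (t - a)` and `|n| ≤ δ = α²`. Since the kernel
`e^{-(t-s)/α}` is its own antiderivative up to the factor `α` and `g a = 0`, integration by parts
turns the noise-free part of `x̃_δ` into the exponential moving average
`α⁻¹ ∫_a^t e^{-(t-s)/α} w s ds` of `w = y' - y' a`. This average tends to `w` uniformly: near `t`
use the uniform continuity of `w`, away from `t` the kernel is at most `e^{-η/α}`, and the missing
kernel mass `e^{-(t-a)/α}` multiplies `w t = w t - w a`. The noise contributes at most
`δ/α + δ/α = 2α`.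
-/

noncomputable def expSmoothing (α a : ℝ) (w : ℝ → ℝ) (t : ℝ) : ℝ :=
  α⁻¹ * ∫ s in a..t, Real.exp (-((t - s) / α)) * w s

theorem hasDerivAt_exp_neg_sub_div (t α s : ℝ) :
    HasDerivAt (fun s => Real.exp (-((t - s) / α))) (Real.exp (-((t - s) / α)) / α) s := by
  simp only [show ∀ x, -((t - x) / α) = (x - t) / α from fun x => by ring]
  convert (((hasDerivAt_id' s).sub_const t).div_const α).exp using 1
  ring

theorem integral_exp_neg_sub_div {α : ℝ} (hα : α ≠ 0) (a t : ℝ) :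
    ∫ s in a..t, Real.exp (-((t - s) / α)) = α * (1 - Real.exp (-((t - a) / α))) := by
  have h s :
      HasDerivAt (fun s => α * Real.exp (-((t - s) / α))) (Real.exp (-((t - s) / α))) s := by
    simpa [mul_div_cancel₀ _ hα] using (hasDerivAt_exp_neg_sub_div t α s).const_mul α
  rw [integral_deriv_eq_sub' _ (funext fun s => (h s).deriv) (fun s _ => (h s).differentiableAt)
    (by fun_prop)]
  simp [mul_sub]

theorem expSmoothing_sub {f g : ℝ → ℝ} {a t α : ℝ} (hf : ContinuousOn f (uIcc a t))
    (hg : ContinuousOn g (uIcc a t)) :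
    expSmoothing α a (fun s => f s - g s) t = expSmoothing α a f t - expSmoothing α a g t := by
  have he : ContinuousOn (fun s => Real.exp (-((t - s) / α))) (uIcc a t) :=
    (Continuous.continuousOn (by fun_prop))
  have hef : IntervalIntegrable (fun s => Real.exp (-((t - s) / α)) * f s) volume a t :=
    (he.mul hf).intervalIntegrable
  have heg : IntervalIntegrable (fun s => Real.exp (-((t - s) / α)) * g s) volume a t :=
    (he.mul hg).intervalIntegrable
  simp only [expSmoothing, mul_sub]
  rw [integral_sub hef heg, mul_sub]

theorem abs_expSmoothing_le {f : ℝ → ℝ} {a t α C : ℝ} (hα : 0 < α) (hat : a ≤ t)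
    (hf : ∀ s ∈ Icc a t, |f s| ≤ C) : |expSmoothing α a f t| ≤ C := by
  have hC : 0 ≤ C := (abs_nonneg _).trans (hf a ⟨le_rfl, hat⟩)
  have hint : ‖∫ s in a..t, Real.exp (-((t - s) / α)) * f s‖
      ≤ ∫ s in a..t, C * Real.exp (-((t - s) / α)) := by
    refine norm_integral_le_of_norm_le hat (ae_of_all _ fun s hs => ?_)
      (Continuous.intervalIntegrable (by fun_prop) _ _)
    rw [Real.norm_eq_abs, abs_mul, Real.abs_exp, mul_comm]
    exact mul_le_mul_of_nonneg_right (hf s (Ioc_subset_Icc_self hs)) (Real.exp_pos _).le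
  rw [Real.norm_eq_abs, integral_const_mul, integral_exp_neg_sub_div hα.ne'] at hint
  rw [expSmoothing, abs_mul, abs_inv, abs_of_pos hα, inv_mul_le_iff₀ hα]
  nlinarith [mul_nonneg (mul_nonneg hC hα.le) (Real.exp_pos (-((t - a) / α))).le]

theorem expSmoothing_eq_sub_of_hasDerivWithinAt {g w : ℝ → ℝ} {a t α : ℝ} (hα : α ≠ 0)
    (hg : ∀ s ∈ uIcc a t, HasDerivWithinAt g (w s) (uIcc a t) s)
    (hw : IntervalIntegrable w volume a t) (hga : g a = 0) :
    expSmoothing α a g t = g t - α * expSmoothing α a w t := by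
  have hk s : HasDerivWithinAt (fun s => α * Real.exp (-((t - s) / α)))
      (Real.exp (-((t - s) / α))) (uIcc a t) s := by
    simpa [mul_div_cancel₀ _ hα] using
      ((hasDerivAt_exp_neg_sub_div t α s).const_mul α).hasDerivWithinAt
  have h := integral_mul_deriv_eq_deriv_mul_of_hasDerivWithinAt hg (fun s _ => hk s) hw
    (Continuous.intervalIntegrable (by fun_prop) _ _)
  simp only [hga, sub_self, zero_div, neg_zero, Real.exp_zero, mul_one, zero_mul, sub_zero,
    mul_comm (g _), mul_comm (w _), mul_assoc, integral_const_mul] at h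
  rw [expSmoothing, expSmoothing, h]
  field_simp

theorem abs_sub_expSmoothing_div_sub_le {f g w : ℝ → ℝ} {a t α : ℝ} (hα : 0 < α) (hat : a ≤ t)
    (hf : ContinuousOn f (Icc a t)) (hg : ∀ s ∈ Icc a t, HasDerivWithinAt g (w s) (Icc a t) s)
    (hw : ContinuousOn w (Icc a t)) (hga : g a = 0)
    (hfg : ∀ s ∈ Icc a t, |f s - g s| ≤ α ^ 2) :
    |(f t - expSmoothing α a f t) / α - expSmoothing α a w t| ≤ 2 * α := by
  rw [← uIcc_of_le hat] at hf hg hw hfg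
  have hgc : ContinuousOn g (uIcc a t) := fun s hs => (hg s hs).continuousWithinAt
  have hsplit : (f t - expSmoothing α a f t) / α - expSmoothing α a w t
      = ((f t - g t) - expSmoothing α a (fun s => f s - g s) t) / α := by
    rw [expSmoothing_sub hf hgc,
      expSmoothing_eq_sub_of_hasDerivWithinAt hα.ne' hg (hw.intervalIntegrable) hga]
    field_simp
    ring
  have hnoise_t : |f t - g t| ≤ α ^ 2 := hfg t right_mem_uIcc
  have hnoise_avg : |expSmoothing α a (fun s => f s - g s) t| ≤ α ^ 2 :=
    abs_expSmoothing_le hα hat fun s hs => hfg s (uIcc_of_le hat ▸ hs)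
  rw [hsplit, abs_div, abs_of_pos hα, div_le_iff₀ hα]
  linarith [abs_sub (f t - g t) (expSmoothing α a (fun s => f s - g s) t)]

theorem exp_neg_div_mul_le {d x α η ε B : ℝ} (hα : 0 < α) (hx : 0 ≤ x) (hε : 0 ≤ ε)
    (hnear : d < η → x ≤ ε) (hfar : x ≤ B) :
    Real.exp (-(d / α)) * x ≤ ε * Real.exp (-(d / α)) + B * Real.exp (-(η / α)) := by
  have hB : 0 ≤ B := hx.trans hfar
  rcases lt_or_ge d η with hd | hd
  · nlinarith [mul_le_mul_of_nonneg_left (hnear hd) (Real.exp_pos (-(d / α))).le,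
      mul_nonneg hB (Real.exp_pos (-(η / α))).le]
  · have hexp : Real.exp (-(d / α)) ≤ Real.exp (-(η / α)) := by gcongr
    nlinarith [mul_le_mul hexp hfar hx (Real.exp_pos _).le,
      mul_nonneg hε (Real.exp_pos (-(d / α))).le]

theorem tendsto_div_nhdsGT_zero_atTop {η : ℝ} (hη : 0 < η) :
    Tendsto (fun α : ℝ => η / α) (𝓝[>] 0) atTop := by
  simpa [div_eq_mul_inv] using tendsto_inv_nhdsGT_zero.const_mul_atTop hη

theorem tendsto_exp_neg_div_div_nhdsGT_zero {η : ℝ} (hη : 0 < η) :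
    Tendsto (fun α : ℝ => Real.exp (-(η / α)) / α) (𝓝[>] 0) (𝓝 0) := by
  have h := ((Real.tendsto_pow_mul_exp_neg_atTop_nhds_zero 1).comp
    (tendsto_div_nhdsGT_zero_atTop hη)).const_mul η⁻¹
  rw [mul_zero] at h
  refine h.congr' (eventually_nhdsWithin_of_forall fun α (hα : 0 < α) => ?_)
  simp only [Function.comp, pow_one]
  field_simp

theorem abs_expSmoothing_sub_le {w : ℝ → ℝ} {a t α ε K : ℝ} (hα : 0 < α) (hat : a ≤ t)
    (hw : ContinuousOn w (Icc a t)) (hwa : w a = 0)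
    (hbound : ∀ s ∈ Icc a t,
      Real.exp (-((t - s) / α)) * |w s - w t| ≤ ε * Real.exp (-((t - s) / α)) + K) :
    |expSmoothing α a w t - w t| ≤ ε + K * ((t - a) / α + 1) := by
  have hE := integral_exp_neg_sub_div hα.ne' a t
  have he : Continuous fun s => Real.exp (-((t - s) / α)) := by fun_prop
  have hew : IntervalIntegrable (fun s => Real.exp (-((t - s) / α)) * w s) volume a t :=
    (he.continuousOn.mul (uIcc_of_le hat ▸ hw)).intervalIntegrable
  have hewt : IntervalIntegrable (fun s => Real.exp (-((t - s) / α)) * w t)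
      volume a t := (he.mul continuous_const).intervalIntegrable _ _
  have hεe : IntervalIntegrable (fun s => ε * Real.exp (-((t - s) / α)))
      volume a t := (continuous_const.mul he).intervalIntegrable _ _
  have hbd := hεe.add (intervalIntegrable_const (c := K))
  have hsplit : expSmoothing α a w t - w t =
      α⁻¹ * (∫ s in a..t, Real.exp (-((t - s) / α)) * (w s - w t)) +
        Real.exp (-((t - a) / α)) * (w a - w t) := by
    simp only [mul_sub]
    rw [expSmoothing, integral_sub hew hewt, integral_mul_const, hE, hwa]
    field_simp
    ring
  have hint : ‖∫ s in a..t, Real.exp (-((t - s) / α)) * (w s - w t)‖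
      ≤ ∫ s in a..t, (ε * Real.exp (-((t - s) / α)) + K) := by
    refine norm_integral_le_of_norm_le hat (ae_of_all _ fun s hs => ?_) hbd
    rw [Real.norm_eq_abs, abs_mul, Real.abs_exp]
    exact hbound s (Ioc_subset_Icc_self hs)
  rw [Real.norm_eq_abs, integral_add hεe intervalIntegrable_const,
    integral_const_mul, hE, intervalIntegral.integral_const, smul_eq_mul] at hint
  have hend := hbound a ⟨le_rfl, hat⟩
  rw [hsplit]
  calc _ ≤ α⁻¹ * |∫ s in a..t, Real.exp (-((t - s) / α)) * (w s - w t)| +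
        Real.exp (-((t - a) / α)) * |w a - w t| := by
        refine (abs_add_le _ _).trans_eq ?_
        rw [abs_mul, abs_mul, abs_inv, abs_of_pos hα, Real.abs_exp]
    _ ≤ α⁻¹ * (ε * (α * (1 - Real.exp (-((t - a) / α)))) + (t - a) * K) +
        (ε * Real.exp (-((t - a) / α)) + K) := by gcongr
    _ = ε + K * ((t - a) / α + 1) := by field_simp; ring

theorem tendstoUniformlyOn_expSmoothing {w : ℝ → ℝ} {a b : ℝ} (hw : ContinuousOn w (Icc a b))
    (hwa : w a = 0) : TendstoUniformlyOn (fun α => expSmoothing α a w) w (𝓝[>] 0) (Icc a b) := by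
  rw [Metric.tendstoUniformlyOn_iff]
  intro ε hε
  obtain ⟨M, hM⟩ := isCompact_Icc.exists_bound_of_continuousOn hw
  obtain ⟨η, hη, hwη⟩ := Metric.uniformContinuousOn_iff_le.1
    (isCompact_Icc.uniformContinuousOn_of_continuous hw) (ε / 2) (half_pos hε)
  have hexp : Tendsto (fun α : ℝ => Real.exp (-(η / α))) (𝓝[>] 0) (𝓝 0) :=
    Real.tendsto_exp_neg_atTop_nhds_zero.comp (tendsto_div_nhdsGT_zero_atTop hη)
  have htail : Tendsto (fun α : ℝ => 2 * M * Real.exp (-(η / α)) * ((b - a) / α + 1))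
      (𝓝[>] 0) (𝓝 0) := by
    have h := (((tendsto_exp_neg_div_div_nhdsGT_zero hη).const_mul (b - a)).add hexp).const_mul
      (2 * M)
    simp only [mul_zero, add_zero] at h
    exact h.congr fun α => by ring
  filter_upwards [htail.eventually_lt_const (half_pos hε), self_mem_nhdsWithin]
    with α htailα (hα : 0 < α) t ht
  have hbound : ∀ s ∈ Icc a t, Real.exp (-((t - s) / α)) * |w s - w t|
      ≤ ε / 2 * Real.exp (-((t - s) / α)) + 2 * M * Real.exp (-(η / α)) := by
    intro s hs
    have hs' : s ∈ Icc a b := ⟨hs.1, hs.2.trans ht.2⟩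
    refine exp_neg_div_mul_le hα (abs_nonneg _) (half_pos hε).le (fun hst => ?_) ?_
    · refine hwη s hs' t ht ?_
      rw [Real.dist_eq, abs_of_nonpos (by linarith [hs.2])]
      linarith
    · have := hM s hs'
      have := hM t ht
      rw [Real.norm_eq_abs] at *
      linarith [abs_sub (w s) (w t)]
  have hM0 : 0 ≤ 2 * M * Real.exp (-(η / α)) :=
    mul_nonneg (by linarith [(norm_nonneg _).trans (hM t ht)]) (Real.exp_pos _).le
  rw [dist_comm, Real.dist_eq]
  calc |expSmoothing α a w t - w t|
      ≤ ε / 2 + 2 * M * Real.exp (-(η / α)) * ((t - a) / α + 1) :=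
        abs_expSmoothing_sub_le hα ht.1 (hw.mono (Icc_subset_Icc_right ht.2)) hwa hbound
    _ ≤ ε / 2 + 2 * M * Real.exp (-(η / α)) * ((b - a) / α + 1) := by
        gcongr
        exact ht.2
    _ < ε := by linarith

theorem tendsto_sqrt_nhdsGT_zero : Tendsto Real.sqrt (𝓝[>] 0) (𝓝[>] 0) := by
  refine tendsto_nhdsWithin_of_tendsto_nhds_of_eventually_within _ ?_
    (eventually_nhdsWithin_of_forall fun δ (hδ : 0 < δ) => Real.sqrt_pos.2 hδ)
  simpa using (Real.continuous_sqrt.tendsto 0).mono_left nhdsWithin_le_nhds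

theorem HasDerivWithinAt.sub_tangent {y y' : ℝ → ℝ} {s : Set ℝ} {a x : ℝ}
    (h : HasDerivWithinAt y (y' x) s x) :
    HasDerivWithinAt (fun t => y t - y a - y' a * (t - a)) (y' x - y' a) s x := by
  have h' := (h.sub_const (y a)).sub (((hasDerivWithinAt_id x s).sub_const a).const_mul (y' a))
  rwa [mul_one] at h'

theorem stable_differentiation_general
    (a b : ℝ) (y y' : ℝ → ℝ)
    (hderiv : ∀ t ∈ Icc a b, HasDerivWithinAt y (y' t) (Icc a b) t)
    (hy'cont : ContinuousOn y' (Icc a b))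
    (ftil : ℝ → ℝ → ℝ)
    (hcont : ∀ δ > 0, ContinuousOn (ftil δ) (Icc a b))
    (hnoise : ∀ δ > 0, ∀ t ∈ Icc a b,
      |ftil δ t - (y t - y a - y' a * (t - a))| ≤ δ) :
    ∀ ε > 0, ∃ δ₀ > 0, ∀ δ : ℝ, 0 < δ → δ < δ₀ → ∀ t ∈ Icc a b,
      |ftil δ t / Real.sqrt δ -
        (1 / δ) * (∫ s in a..t, Real.exp (-((t - s) / Real.sqrt δ)) * ftil δ s) -
        (y' t - y' a)| ≤ ε := by
  intro ε hε
  have hsmooth := Metric.tendstoUniformlyOn_iff.1 (tendstoUniformlyOn_expSmoothing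
    (w := fun s => y' s - y' a) (hy'cont.sub continuousOn_const) (sub_self (y' a)))
    (ε / 2) (half_pos hε)
  have hsmall : ∀ᶠ α : ℝ in 𝓝[>] 0, α < ε / 4 :=
    nhdsWithin_le_nhds (gt_mem_nhds (by positivity))
  obtain ⟨δ₀, hδ₀, hδ₀good⟩ := mem_nhdsGT_iff_exists_Ioo_subset.1
    (tendsto_sqrt_nhdsGT_zero.eventually (hsmooth.and hsmall))
  refine ⟨δ₀, hδ₀, fun δ hδ hδδ₀ t ht => ?_⟩
  obtain ⟨hclose, hα_small⟩ := hδ₀good ⟨hδ, hδδ₀⟩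
  set α := Real.sqrt δ
  have hα : 0 < α := Real.sqrt_pos.2 hδ
  have hδα : δ = α ^ 2 := (Real.sq_sqrt hδ.le).symm
  have hIcc : Icc a t ⊆ Icc a b := Icc_subset_Icc_right ht.2
  have hreg := abs_sub_expSmoothing_div_sub_le hα ht.1 ((hcont δ hδ).mono hIcc)
    (fun s hs => ((hderiv s (hIcc hs)).mono hIcc).sub_tangent (a := a))
    ((hy'cont.sub continuousOn_const).mono hIcc) (by simp)
    fun s hs => hδα ▸ hnoise δ hδ s (hIcc hs)
  have hformula : ftil δ t / α - (1 / δ) * (∫ s in a..t, Real.exp (-((t - s) / α)) * ftil δ s)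
      = (ftil δ t - expSmoothing α a (ftil δ) t) / α := by
    rw [expSmoothing, hδα]
    field_simp
  rw [hformula]
  have hclose_t := hclose t ht
  rw [Real.dist_eq, abs_sub_comm] at hclose_t
  linarith [abs_sub_le ((ftil δ t - expSmoothing α a (ftil δ) t) / α)
    (expSmoothing α a (fun s => y' s - y' a) t) (y' t - y' a)]

/-- Stable differentiation (formula (34) with the coordination `α = √δ`):
if `y` is continuously differentiable on `[a,b]` and the data `f̃_δ` satisfy
`sup_{t∈[a,b]} |f̃_δ(t) − (y(t) − y(a) − y′(a)(t−a))| ≤ δ`, then the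
regularized derivative
`x̃_δ(t) = f̃_δ(t)/√δ − (1/δ) ∫_a^t e^{−(t−s)/√δ} f̃_δ(s) ds`
converges uniformly on `[a,b]` to `y′(t) − y′(a)` as `δ → 0⁺`. -/
theorem stable_differentiation
    (a b : ℝ) (hab : a < b) (y y' : ℝ → ℝ)
    (hderiv : ∀ t ∈ Icc a b, HasDerivWithinAt y (y' t) (Icc a b) t)
    (hy'cont : ContinuousOn y' (Icc a b))
    (ftil : ℝ → ℝ → ℝ)
    (hcont : ∀ δ > 0, ContinuousOn (ftil δ) (Icc a b))
    (hnoise : ∀ δ > 0, ∀ t ∈ Icc a b,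
      |ftil δ t - (y t - y a - y' a * (t - a))| ≤ δ) :
    ∀ ε > 0, ∃ δ₀ > 0, ∀ δ : ℝ, 0 < δ → δ < δ₀ → ∀ t ∈ Icc a b,
      |ftil δ t / Real.sqrt δ -
        (1 / δ) * (∫ s in a..t, Real.exp (-((t - s) / Real.sqrt δ)) * ftil δ s) -
        (y' t - y' a)| ≤ ε :=
  stable_differentiation_general a b y y' hderiv hy'cont ftil hcont hnoise
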